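/- Let A = (Σ, Q, δ) be a weakly acyclic automaton and let S, T ⊆ Q be nonempty subsets. Let a, b be two new letters not in Σ and s_f a new state not in Q, and define A' = (Σ ∪ {a,b}, Q ∪ {s_f}, δ') by: δ'(q, x) = δ(q, x) for q ∈ Q and x ∈ Σ; δ'(q, a) = s_f if q ∉ S and δ'(q, a) = q if q ∈ S; δ'(q, b) = s_f if q ∈ T and δ'(q, b) = q if q ∉ T; and δ'(s_f, x) = s_f for all letters x ∈ Σ ∪ {a,b}. Then A' is weakly acyclic, and there exists a word w ∈ Σ* with δ(S, w) ⊆ T if and only if there exists a word w ∈ Σ* with δ'(Q ∪ {s_f}, a w b) = {s_f}. -/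

import Mathlib

/-- The transition function extended to words: `δ*(q, u)`. -/
def deltaStar {Q A : Type*} (δ : Q → A → Q) (q : Q) (u : List A) : Q :=
  u.foldl δ q

/-- A complete deterministic semi-automaton is weakly acyclic if all simple
cycles are self-loops. -/
def WeaklyAcyclic {Q A : Type*} (δ : Q → A → Q) : Prop :=
  ∀ (q : Q) (u : List A), u ≠ [] → deltaStar δ q u = q → ∀ x ∈ u, δ q x = q

/-- The extended automaton `A'` over the alphabet `A ⊕ Bool` (with the fresh
letter `a` encoded as `Sum.inr false` and `b` as `Sum.inr true`) and state set
`Option Q` (with the fresh sink state `s_f` encoded as `none`):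
letters of `A` act as in `δ`; the letter `a` fixes states of `S` and sends all
other states to `s_f`; the letter `b` sends states of `T` to `s_f` and fixes
all other states; `s_f` is a sink state. -/
def extDelta {Q A : Type*} (δ : Q → A → Q) (S T : Set Q)
    [DecidablePred (· ∈ S)] [DecidablePred (· ∈ T)] :
    Option Q → A ⊕ Bool → Option Q
  | none, _ => none
  | some q, Sum.inl x => some (δ q x)
  | some q, Sum.inr false => if q ∈ S then some q else none
  | some q, Sum.inr true => if q ∈ T then none else some q

/-!
Runs of `A'` from a state of `Q` either fall into the sink `s_f` for good or follow the run of `A`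
on the `Σ`-letters of the word, while `a` and `b` act trivially. Hence a cycle of `A'` through
`q ∈ Q` projects to a cycle of `A` through `q`, all of whose letters fix `q`; the letters `a` and
`b` on the cycle must then fix `q` as well, because leaving `q` with them means entering `s_f`.
The word `a w b` sends `q` to `s_f` exactly when `q ∉ S` or `δ(q, w) ∈ T`.
-/

section Runs

variable {Q A : Type*}

@[simp]
lemma deltaStar_nil (δ : Q → A → Q) (q : Q) : deltaStar δ q [] = q := rfl

@[simp]
lemma deltaStar_cons (δ : Q → A → Q) (q : Q) (x : A) (u : List A) :
    deltaStar δ q (x :: u) = deltaStar δ (δ q x) u := rfl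

lemma deltaStar_append (δ : Q → A → Q) (q : Q) (u v : List A) :
    deltaStar δ q (u ++ v) = deltaStar δ (deltaStar δ q u) v :=
  List.foldl_append ..

lemma weaklyAcyclic_iff (δ : Q → A → Q) :
    WeaklyAcyclic δ ↔ ∀ (q : Q) (u : List A), deltaStar δ q u = q → ∀ x ∈ u, δ q x = q :=
  ⟨fun h q u hu x hx => h q u (List.ne_nil_of_mem hx) hu x hx,
    fun h q u _ hu => h q u hu⟩

end Runs

namespace extDelta

variable {Q A : Type*} (δ : Q → A → Q) (S T : Set Q)
  [DecidablePred (· ∈ S)] [DecidablePred (· ∈ T)]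

@[simp]
lemma deltaStar_none (u : List (A ⊕ Bool)) : deltaStar (extDelta δ S T) none u = none := by
  induction u with
  | nil => rfl
  | cons _ u ih => exact ih

lemma deltaStar_map_inl (q : Q) (w : List A) :
    deltaStar (extDelta δ S T) (some q) (w.map Sum.inl) = some (deltaStar δ q w) := by
  induction w generalizing q with
  | nil => rfl
  | cons x w ih => exact ih (δ q x)

lemma some_inr_eq_self_or_none (q : Q) (b : Bool) :
    extDelta δ S T (some q) (Sum.inr b) = some q ∨ extDelta δ S T (some q) (Sum.inr b) = none := by
  cases b <;> simp only [extDelta] <;> split_ifs <;> simp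

lemma deltaStar_some (q : Q) (u : List (A ⊕ Bool)) :
    deltaStar (extDelta δ S T) (some q) u = none ∨
      deltaStar (extDelta δ S T) (some q) u = some (deltaStar δ q (u.filterMap Sum.getLeft?)) := by
  induction u generalizing q with
  | nil => simp
  | cons y u ih =>
    rcases y with x | b
    · exact ih (δ q x)
    · rcases some_inr_eq_self_or_none δ S T q b with h | h
      · simpa [h, List.filterMap_cons] using ih q
      · simp [h]

lemma fixes_of_deltaStar_eq_self (q : Q) (u : List (A ⊕ Bool))
    (hfix : ∀ x, Sum.inl x ∈ u → δ q x = q)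
    (hcycle : deltaStar (extDelta δ S T) (some q) u = some q) :
    ∀ y ∈ u, extDelta δ S T (some q) y = some q := by
  induction u with
  | nil => simp
  | cons y u ih =>
    have hy : extDelta δ S T (some q) y = some q := by
      rcases y with x | b
      · simp [extDelta, hfix x List.mem_cons_self]
      · rcases some_inr_eq_self_or_none δ S T q b with h | h
        · exact h
        · simp [h] at hcycle
    rw [deltaStar_cons, hy] at hcycle
    simpa [hy] using ih (fun x hx => hfix x (List.mem_cons_of_mem y hx)) hcycle

theorem weaklyAcyclic (hwa : WeaklyAcyclic δ) : WeaklyAcyclic (extDelta δ S T) := by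
  rw [weaklyAcyclic_iff] at hwa ⊢
  rintro (_ | q) u hcycle
  · exact fun _ _ => rfl
  · have hproj : deltaStar δ q (u.filterMap Sum.getLeft?) = q := by
      simpa [hcycle, eq_comm] using deltaStar_some δ S T q u
    refine fixes_of_deltaStar_eq_self δ S T q u (fun x hx => hwa q _ hproj x ?_) hcycle
    exact List.mem_filterMap.mpr ⟨Sum.inl x, hx, rfl⟩

lemma deltaStar_some_enclosed_eq_none_iff (q : Q) (w : List A) :
    deltaStar (extDelta δ S T) (some q) (Sum.inr false :: (w.map Sum.inl ++ [Sum.inr true])) =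
        none ↔ q ∈ S → deltaStar δ q w ∈ T := by
  by_cases hq : q ∈ S
  · simp only [deltaStar_cons, extDelta, hq, if_true, deltaStar_append, deltaStar_map_inl]
    split_ifs <;> simp_all
  · simp [extDelta, hq]

end extDelta

theorem set_transporter_reduction_general {Q A : Type*} (δ : Q → A → Q) (hwa : WeaklyAcyclic δ)
    (S T : Set Q) [DecidablePred (· ∈ S)] [DecidablePred (· ∈ T)] :
    WeaklyAcyclic (extDelta δ S T) ∧
    ((∃ w : List A, (fun q => deltaStar δ q w) '' S ⊆ T) ↔
      ∃ w : List A,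
        (fun p => deltaStar (extDelta δ S T) p
            (Sum.inr false :: (w.map Sum.inl ++ [Sum.inr true]))) ''
          Set.univ = {none}) := by
  refine ⟨extDelta.weaklyAcyclic δ S T hwa, exists_congr fun w => ?_⟩
  rw [Set.image_univ, Set.range_eq_singleton_iff, Option.forall, Set.image_subset_iff]
  simp only [extDelta.deltaStar_none, true_and, extDelta.deltaStar_some_enclosed_eq_none_iff]
  rfl

/-- The set-transporter reduction: `A'` is weakly acyclic, and some word of
`A*` maps `S` into `T` in `A` iff some word `w ∈ A*` satisfies
`δ'(Q ∪ {s_f}, a w b) = {s_f}` in `A'`. -/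
theorem set_transporter_reduction {Q A : Type*} [Fintype Q] [Nonempty Q]
    [Fintype A] (δ : Q → A → Q) (hwa : WeaklyAcyclic δ)
    (S T : Set Q) [DecidablePred (· ∈ S)] [DecidablePred (· ∈ T)]
    (hS : S.Nonempty) (hT : T.Nonempty) :
    WeaklyAcyclic (extDelta δ S T) ∧
    ((∃ w : List A, (fun q => deltaStar δ q w) '' S ⊆ T) ↔
      ∃ w : List A,
        (fun p => deltaStar (extDelta δ S T) p
            (Sum.inr false :: (w.map Sum.inl ++ [Sum.inr true]))) ''
          Set.univ = {none}) :=
  set_transporter_reduction_general δ hwa S T
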